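/- Let F : ℝᵃ × ℝᵃ × ℝᵇ → ℝ and G : ℝᵃ × ℝᵃ → ℝ be differentiable with L_F- and L_G-Lipschitz gradients, and suppose the partial gradients in the first block satisfy the descent inequalities with uniform constants L_{F,p} and L_{G,p} (i.e., F(p′,q,t) ≤ F(p,q,t) + ⟨∇_p F(p,q,t), p′−p⟩ + (L_{F,p}/2)‖p′−p‖² for all p,p′,q,t, and similarly for G). Let a = 4n and S = {p ∈ (ℝ⁴)ⁿ : ‖p_i‖ = 1 for all i} be the product of unit spheres, and define L_β(p,q,t,λ) = F(p,q,t) + G(p,q) − ⟨λ, p − q⟩ + (β/2)‖p − q‖². Let H₁, H₂, H₃ be symmetric matrices with H₁ ≻ (L_{F,p}+L_{G,p})I, H₂ ≻ 0, H₃ ≻ 0, and let β > max{ 8(L_F²+L_G²)/(σ_min(H₁) − L_{F,p} − L_{G,p}), (8(L_F²+L_G²) + 16σ_max²(H₂))/σ_min(H₂), 8L_F²/σ_min(H₃) }. Consider a sequence (p^k, q^k, t^k, λ^k) such that for each k: p^{k+1} minimizes over p ∈ S the function p ↦ ⟨∇_p F(p^k,q^k,t^k) + ∇_p G(p^k,q^k),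 p⟩ − ⟨λ^k, p⟩ + (β/2)‖p − q^k‖² + ½‖p − p^k‖²_{H₁}; q^{k+1} minimizes q ↦ L_β(p^{k+1},q,t^k,λ^k) + ½‖q − q^k‖²_{H₂} over ℝᵃ; t^{k+1} minimizes t ↦ L_β(p^{k+1},q^{k+1},t,λ^k) + ½‖t − t^k‖²_{H₃} over ℝᵇ; and λ^{k+1} = λ^k − β(p^{k+1} − q^{k+1}). Define Φ^k = L_β(p^k,q^k,t^k,λ^k) + (4/β)‖H₂(q^k − q^{k−1})‖² + (4L_F²/β)‖t^k − t^{k−1}‖². Then for every k ≥ 2, Φ^k − Φ^{k+1} ≥ ‖p^{k+1} − p^k‖²_{P₁} + ‖q^{k+1} − q^k‖²_{P₂} + ‖t^{k+1} − t^k‖²_{P₃}, where P₁ = ½(H₁ − (L_{F,p}+L_{G,p})I) − (4/β)(L_F²+L_G²)I, P₂ = ½H₂ − (4/β)(L_F²+L_G²)I − (8/β)H₂ᵀH₂, P₃ = ½H₃ − (4/β)L_F² I; moreover P₁, P₂, P₃ are positive semidefinite, so the right-hand side is nonnegative. -/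

import Mathlib

open Matrix RealInnerProductSpace

/-- The quadratic form `v ↦ vᵀMv` of a matrix `M`, evaluated on a Euclidean vector;
`‖v‖²_M = vᵀMv`. -/
noncomputable def quadForm {ι : Type*} [Fintype ι] (M : Matrix ι ι ℝ)
    (v : EuclideanSpace ℝ ι) : ℝ :=
  (fun i => v i) ⬝ᵥ (M *ᵥ fun i => v i)

/-- Matrix–vector multiplication acting on Euclidean vectors. -/
noncomputable def matVec {ι : Type*} [Fintype ι] (M : Matrix ι ι ℝ)
    (v : EuclideanSpace ℝ ι) : EuclideanSpace ℝ ι :=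
  (WithLp.equiv 2 (ι → ℝ)).symm (M *ᵥ (WithLp.equiv 2 (ι → ℝ) v))

/-- The smallest eigenvalue `σ_min(M)` of a symmetric matrix `M`, via its variational
(Rayleigh quotient) characterization. -/
noncomputable def rayMin {ι : Type*} [Fintype ι] (M : Matrix ι ι ℝ) : ℝ :=
  ⨅ v : {v : ι → ℝ // ∑ i, v i ^ 2 = 1}, (v : ι → ℝ) ⬝ᵥ (M *ᵥ (v : ι → ℝ))

/-- The largest eigenvalue `σ_max(M)` of a symmetric matrix `M`, via its variational
(Rayleigh quotient) characterization. -/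
noncomputable def rayMax {ι : Type*} [Fintype ι] (M : Matrix ι ι ℝ) : ℝ :=
  ⨆ v : {v : ι → ℝ // ∑ i, v i ^ 2 = 1}, (v : ι → ℝ) ⬝ᵥ (M *ᵥ (v : ι → ℝ))

variable {n b : ℕ}

/-- Partial gradient `∇_p F(p,q,t)` with respect to the first block. -/
noncomputable def gradP {ι κ : Type*} [Fintype ι] [Fintype κ]
    (F : EuclideanSpace ℝ ι → EuclideanSpace ℝ ι → EuclideanSpace ℝ κ → ℝ)
    (p q : EuclideanSpace ℝ ι) (t : EuclideanSpace ℝ κ) : EuclideanSpace ℝ ι :=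
  gradient (fun p' => F p' q t) p

/-- Partial gradient `∇_q F(p,q,t)` with respect to the second block. -/
noncomputable def gradQ {ι κ : Type*} [Fintype ι] [Fintype κ]
    (F : EuclideanSpace ℝ ι → EuclideanSpace ℝ ι → EuclideanSpace ℝ κ → ℝ)
    (p q : EuclideanSpace ℝ ι) (t : EuclideanSpace ℝ κ) : EuclideanSpace ℝ ι :=
  gradient (fun q' => F p q' t) q

/-- Partial gradient `∇_t F(p,q,t)` with respect to the third block. -/
noncomputable def gradT {ι κ : Type*} [Fintype ι] [Fintype κ]
    (F : EuclideanSpace ℝ ι → EuclideanSpace ℝ ι → EuclideanSpace ℝ κ → ℝ)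
    (p q : EuclideanSpace ℝ ι) (t : EuclideanSpace ℝ κ) : EuclideanSpace ℝ κ :=
  gradient (fun t' => F p q t') t

/-- Partial gradient `∇_p G(p,q)` with respect to the first block. -/
noncomputable def gradPG {ι : Type*} [Fintype ι]
    (G : EuclideanSpace ℝ ι → EuclideanSpace ℝ ι → ℝ)
    (p q : EuclideanSpace ℝ ι) : EuclideanSpace ℝ ι :=
  gradient (fun p' => G p' q) p

/-- Partial gradient `∇_q G(p,q)` with respect to the second block. -/
noncomputable def gradQG {ι : Type*} [Fintype ι]
    (G : EuclideanSpace ℝ ι → EuclideanSpace ℝ ι → ℝ)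
    (p q : EuclideanSpace ℝ ι) : EuclideanSpace ℝ ι :=
  gradient (fun q' => G p q') q

/-- The augmented Lagrangian
`L_β(p,q,t,λ) = F(p,q,t) + G(p,q) − ⟨λ, p − q⟩ + (β/2)‖p − q‖²`. -/
noncomputable def Lbeta {ι κ : Type*} [Fintype ι] [Fintype κ]
    (F : EuclideanSpace ℝ ι → EuclideanSpace ℝ ι → EuclideanSpace ℝ κ → ℝ)
    (G : EuclideanSpace ℝ ι → EuclideanSpace ℝ ι → ℝ) (β : ℝ)
    (p q : EuclideanSpace ℝ ι) (t : EuclideanSpace ℝ κ) (lam : EuclideanSpace ℝ ι) : ℝ :=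
  F p q t + G p q - ⟪lam, p - q⟫ + (β / 2) * ‖p - q‖ ^ 2

/-- The product of `n` unit spheres `S = {p ∈ (ℝ⁴)ⁿ : ‖p_i‖ = 1 for all i}`,
inside `ℝ^{4n} = EuclideanSpace ℝ (Fin n × Fin 4)`. -/
def sphereProd (n : ℕ) : Set (EuclideanSpace ℝ (Fin n × Fin 4)) :=
  {p | ∀ i : Fin n, Real.sqrt (∑ j : Fin 4, p (i, j) ^ 2) = 1}

/-! Each block update decreases the augmented Lagrangian: by the descent inequalities the
linearized `p`-step gains `‖Δp‖²_{H₁} / 2 - (L_{F,p} + L_{G,p}) ‖Δp‖² / 2`, and comparing the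
`q`- and `t`-minimizers with the previous iterates gains `‖Δq‖²_{H₂} / 2` and `‖Δt‖²_{H₃} / 2`;
only the dual step increases `L_β`, by `‖Δλ‖² / β`. Fermat's rule for the smooth unconstrained
`q`-subproblem gives `λ^{k+1} = -(∇_q F + ∇_q G + H₂ Δq^{k+1})`, so the Lipschitz bounds give
`‖Δλ‖² ≤ 4 (L_F² + L_G²)(‖Δp‖² + ‖Δq‖²) + 4 L_F² ‖Δt^k‖² + 4 ‖H₂ Δq^{k+1}‖² + 4 ‖H₂ Δq^k‖²`.
The terms with the previous increments `Δq^k, Δt^k` are exactly those carried by `Φ^k`.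
The matrices `P_i` are positive semidefinite because `σ_min(M) ‖v‖² ≤ ‖v‖²_M` and
`‖M v‖ ≤ σ_max(M) ‖v‖` for `M ⪰ 0`, and `β` is large enough to absorb the negative terms. -/

section QuadForm

variable {ι : Type*} [Fintype ι]

lemma quadForm_eq_inner (M : Matrix ι ι ℝ) (v : EuclideanSpace ℝ ι) :
    quadForm M v = ⟪v, matVec M v⟫ := by
  simp [quadForm, matVec, PiLp.inner_apply, dotProduct, mul_comm]

lemma matVec_eq_toEuclideanLin [DecidableEq ι] (M : Matrix ι ι ℝ) :
    matVec M = toEuclideanLin M := rfl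

lemma inner_matVec_left {M : Matrix ι ι ℝ} (hM : M.IsHermitian) (v w : EuclideanSpace ℝ ι) :
    ⟪matVec M v, w⟫ = ⟪v, matVec M w⟫ := by
  classical
  exact (isSymmetric_toEuclideanLin_iff.2 hM) v w

lemma quadForm_zero (M : Matrix ι ι ℝ) : quadForm M 0 = 0 := by
  simp [quadForm]

lemma sub_quadForm (A B : Matrix ι ι ℝ) (v : EuclideanSpace ℝ ι) :
    quadForm (A - B) v = quadForm A v - quadForm B v := by
  simp [quadForm, sub_mulVec, dotProduct_sub]

lemma smul_quadForm (c : ℝ) (A : Matrix ι ι ℝ) (v : EuclideanSpace ℝ ι) :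
    quadForm (c • A) v = c * quadForm A v := by
  simp [quadForm, smul_mulVec, dotProduct_smul]

lemma one_quadForm [DecidableEq ι] (v : EuclideanSpace ℝ ι) :
    quadForm (1 : Matrix ι ι ℝ) v = ‖v‖ ^ 2 := by
  rw [quadForm_eq_inner, matVec_eq_toEuclideanLin]
  simp

lemma transpose_mul_self_quadForm (A : Matrix ι ι ℝ) (v : EuclideanSpace ℝ ι) :
    quadForm (Aᵀ * A) v = ‖matVec A v‖ ^ 2 := by
  rw [quadForm, ← mulVec_mulVec, dotProduct_mulVec, vecMul_transpose, EuclideanSpace.norm_sq_eq]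
  simp [matVec, dotProduct, sq]

lemma quadForm_smul (M : Matrix ι ι ℝ) (c : ℝ) (v : EuclideanSpace ℝ ι) :
    quadForm M (c • v) = c ^ 2 * quadForm M v := by
  rw [quadForm, quadForm, show (fun i => (c • v) i) = c • fun i => v i from rfl, mulVec_smul,
    dotProduct_smul, smul_dotProduct, smul_eq_mul, smul_eq_mul, ← mul_assoc, sq]

lemma continuous_quadForm (M : Matrix ι ι ℝ) : Continuous (quadForm M) := by
  classical
  simp_rw [funext (quadForm_eq_inner M), matVec_eq_toEuclideanLin]
  exact continuous_id.inner (LinearMap.continuous_of_finiteDimensional _)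

lemma posSemidef_of_quadForm_nonneg {P : Matrix ι ι ℝ} (hP : P.IsHermitian)
    (h : ∀ v, 0 ≤ quadForm P v) : P.PosSemidef :=
  posSemidef_iff_dotProduct_mulVec.2 ⟨hP, fun x => by simpa [quadForm] using h (WithLp.toLp 2 x)⟩

end QuadForm

section Rayleigh

variable {ι : Type*} [Fintype ι]

lemma norm_eq_one_iff_sum_sq (v : EuclideanSpace ℝ ι) : ‖v‖ = 1 ↔ ∑ i, v i ^ 2 = 1 := by
  rw [← pow_eq_one_iff_of_nonneg (norm_nonneg v) two_ne_zero, EuclideanSpace.norm_sq_eq]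
  simp

lemma range_rayleigh_subset_image_sphere (M : Matrix ι ι ℝ) :
    Set.range (fun w : {w : ι → ℝ // ∑ i, w i ^ 2 = 1} => (w : ι → ℝ) ⬝ᵥ (M *ᵥ (w : ι → ℝ)))
      ⊆ quadForm M '' Metric.sphere 0 1 := by
  rintro _ ⟨w, rfl⟩
  exact ⟨WithLp.toLp 2 w, by simpa [norm_eq_one_iff_sum_sq] using w.2, rfl⟩

lemma rayMin_le_quadForm (M : Matrix ι ι ℝ) {v : EuclideanSpace ℝ ι} (hv : ‖v‖ = 1) :
    rayMin M ≤ quadForm M v :=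
  ciInf_le (((isCompact_sphere 0 1).image (continuous_quadForm M)).bddBelow.mono
    (range_rayleigh_subset_image_sphere M)) ⟨v.ofLp, (norm_eq_one_iff_sum_sq v).1 hv⟩

lemma quadForm_le_rayMax (M : Matrix ι ι ℝ) {v : EuclideanSpace ℝ ι} (hv : ‖v‖ = 1) :
    quadForm M v ≤ rayMax M :=
  le_ciSup (((isCompact_sphere 0 1).image (continuous_quadForm M)).bddAbove.mono
    (range_rayleigh_subset_image_sphere M)) ⟨v.ofLp, (norm_eq_one_iff_sum_sq v).1 hv⟩

lemma exists_quadForm_eq_rayMin [Nonempty ι] (M : Matrix ι ι ℝ) :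
    ∃ v : EuclideanSpace ℝ ι, ‖v‖ = 1 ∧ quadForm M v = rayMin M := by
  obtain ⟨u, hu, hmin⟩ := (isCompact_sphere (0 : EuclideanSpace ℝ ι) 1).exists_isMinOn
    (NormedSpace.sphere_nonempty.2 zero_le_one) (continuous_quadForm M).continuousOn
  rw [mem_sphere_zero_iff_norm] at hu
  have : Nonempty {w : ι → ℝ // ∑ i, w i ^ 2 = 1} := ⟨⟨u.ofLp, (norm_eq_one_iff_sum_sq u).1 hu⟩⟩
  refine ⟨u, hu, le_antisymm (le_ciInf fun w => isMinOn_iff.1 hmin (WithLp.toLp 2 w) ?_)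
    (rayMin_le_quadForm M hu)⟩
  simpa [norm_eq_one_iff_sum_sq] using w.2

lemma rayMin_mul_norm_sq_le_quadForm (M : Matrix ι ι ℝ) (v : EuclideanSpace ℝ ι) :
    rayMin M * ‖v‖ ^ 2 ≤ quadForm M v := by
  rcases eq_or_ne v 0 with rfl | hv
  · simp [quadForm]
  have hv' : ‖v‖ ≠ 0 := norm_ne_zero_iff.2 hv
  have h := rayMin_le_quadForm M (v := ‖v‖⁻¹ • v) (by simp [norm_smul, hv'])
  rw [quadForm_smul, inv_pow, inv_mul_eq_div, le_div_iff₀ (by positivity)] at h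
  exact h

lemma rayMin_nonneg {M : Matrix ι ι ℝ} (hM : M.PosSemidef) : 0 ≤ rayMin M :=
  Real.iInf_nonneg fun w => by simpa using hM.dotProduct_mulVec_nonneg w

lemma quadForm_pos {M : Matrix ι ι ℝ} (hM : M.PosDef) {v : EuclideanSpace ℝ ι} (hv : v ≠ 0) :
    0 < quadForm M v := by
  simpa [quadForm] using hM.dotProduct_mulVec_pos (x := v.ofLp) (by simpa using hv)

lemma lt_rayMin_of_posDef_sub_smul_one [Nonempty ι] [DecidableEq ι] {M : Matrix ι ι ℝ} {c : ℝ}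
    (hM : (M - c • 1).PosDef) : c < rayMin M := by
  obtain ⟨u, hu, hmin⟩ := exists_quadForm_eq_rayMin M
  have h := quadForm_pos hM (v := u) (by rintro rfl; simp at hu)
  rw [sub_quadForm, smul_quadForm, one_quadForm, hu, hmin] at h
  linarith

lemma rayMin_pos [Nonempty ι] [DecidableEq ι] {M : Matrix ι ι ℝ} (hM : M.PosDef) :
    0 < rayMin M :=
  lt_rayMin_of_posDef_sub_smul_one (c := 0) (by simpa using hM)

lemma norm_matVec_sq_le [DecidableEq ι] {M : Matrix ι ι ℝ} (hM : M.PosSemidef)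
    (v : EuclideanSpace ℝ ι) : ‖matVec M v‖ ^ 2 ≤ rayMax M ^ 2 * ‖v‖ ^ 2 := by
  have hT := isSymmetric_toEuclideanLin_iff.2 hM.1
  set b := hT.eigenvectorBasis rfl
  set μ := hT.eigenvalues rfl
  have hμ : ∀ i, 0 ≤ μ i ∧ μ i ≤ rayMax M := fun i => by
    have hbi : quadForm M (b i) = μ i := by
      rw [quadForm_eq_inner, matVec_eq_toEuclideanLin, hT.apply_eigenvectorBasis,
        real_inner_smul_right, real_inner_self_eq_norm_sq, OrthonormalBasis.norm_eq_one]
      simp [μ]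
    rw [← hbi]
    exact ⟨by simpa [quadForm] using hM.dotProduct_mulVec_nonneg (b i).ofLp,
      quadForm_le_rayMax M (b.norm_eq_one i)⟩
  rw [← b.repr.norm_map, ← b.repr.norm_map v, EuclideanSpace.norm_sq_eq,
    EuclideanSpace.norm_sq_eq, Finset.mul_sum]
  refine Finset.sum_le_sum fun i _ => ?_
  rw [matVec_eq_toEuclideanLin, hT.eigenvectorBasis_apply_self_apply]
  simp only [RCLike.ofReal_real_eq_id, id, norm_mul, mul_pow]
  gcongr
  rw [Real.norm_eq_abs, abs_of_nonneg (hμ i).1]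
  exact (hμ i).2

end Rayleigh

section SemidefiniteCoefficients

variable {ι : Type*} [Fintype ι] [DecidableEq ι]

lemma posSemidef_half_smul_sub_smul_one {M : Matrix ι ι ℝ} {c L β : ℝ}
    (hM : (M - c • 1).PosDef) (hβ0 : 0 < β) (hβ : 8 * L / (rayMin M - c) < β) :
    ((1 / 2 : ℝ) • (M - c • 1) - ((4 / β) * L) • 1).PosSemidef := by
  refine posSemidef_of_quadForm_nonneg
    ((hM.1.smul (.all _)).sub (isHermitian_one.smul (.all _))) fun v => ?_
  -- for empty `ι`, `rayMin M = 0` is a junk value and `hβ` carries no information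
  rcases isEmpty_or_nonempty ι with hι | hι
  · simp [quadForm]
  have hc := lt_rayMin_of_posDef_sub_smul_one hM
  rw [div_lt_iff₀ (sub_pos.2 hc)] at hβ
  have hcoef : 4 / β * L ≤ (rayMin M - c) / 2 := by
    rw [div_mul_eq_mul_div, div_le_div_iff₀ hβ0 two_pos]
    linarith
  have hray := rayMin_mul_norm_sq_le_quadForm M v
  rw [sub_quadForm, smul_quadForm, sub_quadForm, smul_quadForm, one_quadForm, smul_quadForm,
    one_quadForm]
  nlinarith [mul_le_mul_of_nonneg_right hcoef (sq_nonneg ‖v‖)]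

lemma posSemidef_half_smul_sub_smul_one_sub_smul_transpose_mul_self {M : Matrix ι ι ℝ}
    {L β : ℝ} (hM : M.PosDef) (hβ0 : 0 < β) (hβ : (8 * L + 16 * rayMax M ^ 2) / rayMin M < β) :
    ((1 / 2 : ℝ) • M - ((4 / β) * L) • 1 - (8 / β) • (Mᵀ * M)).PosSemidef := by
  have hMtM : (Mᵀ * M).IsHermitian := by
    simpa using isHermitian_conjTranspose_mul_self M
  refine posSemidef_of_quadForm_nonneg (((hM.1.smul (.all _)).sub
    (isHermitian_one.smul (.all _))).sub (hMtM.smul (.all _))) fun v => ?_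
  rcases isEmpty_or_nonempty ι with hι | hι
  · simp [quadForm]
  rw [div_lt_iff₀ (rayMin_pos hM)] at hβ
  have hcoef : 4 / β * L + 8 / β * rayMax M ^ 2 ≤ rayMin M / 2 := by
    rw [div_mul_eq_mul_div, div_mul_eq_mul_div, ← add_div, div_le_div_iff₀ hβ0 two_pos]
    linarith
  have hray := rayMin_mul_norm_sq_le_quadForm M v
  have hnorm := mul_le_mul_of_nonneg_left (norm_matVec_sq_le hM.posSemidef v)
    (by positivity : 0 ≤ 8 / β)
  rw [sub_quadForm, sub_quadForm, smul_quadForm, smul_quadForm, one_quadForm, smul_quadForm,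
    transpose_mul_self_quadForm]
  nlinarith [mul_le_mul_of_nonneg_right hcoef (sq_nonneg ‖v‖)]

end SemidefiniteCoefficients

lemma le_sq_mul_of_sqrt_add_add_le {a b c s L : ℝ} (ha : 0 ≤ a) (hc : 0 ≤ c) (hs : 0 ≤ s)
    (h : √(a + b + c) ≤ L * √s) : b ≤ L ^ 2 * s := by
  have := (Real.sqrt_le_iff.1 h).2
  rw [mul_pow, Real.sq_sqrt hs] at this
  linarith

lemma le_sq_mul_of_sqrt_add_le {a b s L : ℝ} (ha : 0 ≤ a) (hs : 0 ≤ s)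
    (h : √(a + b) ≤ L * √s) : b ≤ L ^ 2 * s := by
  have := (Real.sqrt_le_iff.1 h).2
  rw [mul_pow, Real.sq_sqrt hs] at this
  linarith

lemma norm_sub_sq_le_of_eq_neg_add {E : Type*} [SeminormedAddCommGroup E]
    {l₀ l₁ a₀ a₁ b₀ b₁ c₀ c₁ : E} {A B : ℝ} (h₁ : l₁ = -(a₁ + b₁ + c₁))
    (h₀ : l₀ = -(a₀ + b₀ + c₀)) (ha : ‖a₁ - a₀‖ ^ 2 ≤ A) (hb : ‖b₁ - b₀‖ ^ 2 ≤ B) :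
    ‖l₁ - l₀‖ ^ 2 ≤ 4 * (A + B + ‖c₁‖ ^ 2 + ‖c₀‖ ^ 2) := by
  have htri : ‖l₁ - l₀‖ ≤ ‖a₁ - a₀‖ + ‖b₁ - b₀‖ + ‖c₁‖ + ‖c₀‖ := by
    rw [h₁, h₀, show -(a₁ + b₁ + c₁) - -(a₀ + b₀ + c₀) = -((a₁ - a₀ + (b₁ - b₀) + c₁) - c₀) by
      abel, norm_neg]
    exact (norm_sub_le _ _).trans (add_le_add_left (norm_add₃_le) _)
  have := pow_le_pow_left₀ (norm_nonneg _) htri 2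
  nlinarith [sq_nonneg (‖a₁ - a₀‖ - ‖b₁ - b₀‖), sq_nonneg (‖a₁ - a₀‖ - ‖c₁‖),
    sq_nonneg (‖a₁ - a₀‖ - ‖c₀‖), sq_nonneg (‖b₁ - b₀‖ - ‖c₁‖), sq_nonneg (‖b₁ - b₀‖ - ‖c₀‖),
    sq_nonneg (‖c₁‖ - ‖c₀‖)]

section AugmentedLagrangian

variable {ι κ : Type*} [Fintype ι] [Fintype κ]
  {F : EuclideanSpace ℝ ι → EuclideanSpace ℝ ι → EuclideanSpace ℝ κ → ℝ}
  {G : EuclideanSpace ℝ ι → EuclideanSpace ℝ ι → ℝ} {β : ℝ}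

lemma Lbeta_of_dual_update {p q lam lam' : EuclideanSpace ℝ ι} {t : EuclideanSpace ℝ κ}
    (hlam : lam' = lam - β • (p - q)) :
    Lbeta F G β p q t lam' = Lbeta F G β p q t lam + ‖lam' - lam‖ ^ 2 / β := by
  subst hlam
  rw [sub_sub_cancel_left, norm_neg, norm_smul, mul_pow, Real.norm_eq_abs, sq_abs]
  rw [Lbeta, Lbeta, inner_sub_left, real_inner_smul_left, real_inner_self_eq_norm_sq]
  rcases eq_or_ne β 0 with rfl | hβ
  · simp
  field_simp
  ring

lemma Lbeta_add_half_quadForm_le_of_linearized_step {H : Matrix ι ι ℝ}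
    {p₀ p₁ q gF gG lam : EuclideanSpace ℝ ι} {t : EuclideanSpace ℝ κ} {LFp LGp : ℝ}
    (hF : F p₁ q t ≤ F p₀ q t + ⟪gF, p₁ - p₀⟫ + (LFp / 2) * ‖p₁ - p₀‖ ^ 2)
    (hG : G p₁ q ≤ G p₀ q + ⟪gG, p₁ - p₀⟫ + (LGp / 2) * ‖p₁ - p₀‖ ^ 2)
    (hstep : ⟪gF + gG, p₁⟫ - ⟪lam, p₁⟫ + (β / 2) * ‖p₁ - q‖ ^ 2
        + (1 / 2) * quadForm H (p₁ - p₀)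
      ≤ ⟪gF + gG, p₀⟫ - ⟪lam, p₀⟫ + (β / 2) * ‖p₀ - q‖ ^ 2 + (1 / 2) * quadForm H (p₀ - p₀)) :
    Lbeta F G β p₁ q t lam + (1 / 2) * quadForm H (p₁ - p₀)
      ≤ Lbeta F G β p₀ q t lam + (LFp + LGp) / 2 * ‖p₁ - p₀‖ ^ 2 := by
  rw [sub_self, quadForm_zero] at hstep
  simp only [Lbeta, inner_sub_right, inner_add_left] at *
  linarith

lemma dual_update_eq_of_forall_qStep_le [DecidableEq ι] {H : Matrix ι ι ℝ} (hH : H.IsHermitian)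
    {p q q₀ lam : EuclideanSpace ℝ ι} {t : EuclideanSpace ℝ κ}
    (hF : DifferentiableAt ℝ (fun y => F p y t) q) (hG : DifferentiableAt ℝ (fun y => G p y) q)
    (hmin : ∀ y, Lbeta F G β p q t lam + (1 / 2) * quadForm H (q - q₀)
      ≤ Lbeta F G β p y t lam + (1 / 2) * quadForm H (y - q₀)) :
    lam - β • (p - q) = -(gradQ F p q t + gradQG G p q + matVec H (q - q₀)) := by
  set g := gradQ F p q t + gradQG G p q + (lam - β • (p - q)) + matVec H (q - q₀) with hg_def
  have hsub : HasFDerivAt (fun y : EuclideanSpace ℝ ι => p - y) (-ContinuousLinearMap.id ℝ _) q :=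
    (hasFDerivAt_id q).const_sub p
  have hshift : HasFDerivAt (fun y : EuclideanSpace ℝ ι => y - q₀) (ContinuousLinearMap.id ℝ _) q :=
    (hasFDerivAt_id q).sub_const q₀
  have hmat : HasFDerivAt (fun y => matVec H (y - q₀))
      ((toEuclideanLin H).toContinuousLinearMap) q :=
    (toEuclideanLin H).toContinuousLinearMap.hasFDerivAt.comp q hshift
  have hderiv : HasFDerivAt (fun y => Lbeta F G β p y t lam + (1 / 2) * quadForm H (y - q₀))
      (InnerProductSpace.toDual ℝ _ g) q := by
    simp only [Lbeta, quadForm_eq_inner]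
    refine ((((hasGradientAt_iff_hasFDerivAt.1 hF.hasGradientAt).add
      (hasGradientAt_iff_hasFDerivAt.1 hG.hasGradientAt)).sub
      ((hasFDerivAt_const lam q).inner ℝ hsub)).add (hsub.norm_sq.const_mul (β / 2))).add
      ((hshift.inner ℝ hmat).const_mul (1 / 2)) |>.congr_fderiv ?_
    ext w
    have hsymm : ⟪q, toEuclideanLin H w⟫ - ⟪q₀, toEuclideanLin H w⟫ = ⟪matVec H (q - q₀), w⟫ := by
      rw [inner_matVec_left hH, inner_sub_left]
      rfl
    simp only [toDual_gradient, map_sub, ContinuousLinearMap.comp_neg, ContinuousLinearMap.comp_id,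
      neg_sub, one_div, _root_.add_apply, _root_.sub_apply, ContinuousLinearMap.comp_apply,
      ContinuousLinearMap.prod_apply, _root_.zero_apply, _root_.neg_apply,
      ContinuousLinearMap.id_apply, fderivInnerCLM_apply, inner_neg_right, real_inner_comm w,
      inner_zero_left, add_zero, sub_neg_eq_add, _root_.smul_apply, coe_innerSL_apply,
      nsmul_eq_mul, Nat.cast_ofNat, smul_eq_mul, LinearMap.coe_toContinuousLinearMap',
      inner_sub_left, hsymm, gradQ, gradQG, map_add, map_smul,
      InnerProductSpace.toDual_apply_apply, g]
    ring
  have hg : g = 0 := by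
    simpa using (IsLocalMin.hasFDerivAt_eq_zero (Filter.Eventually.of_forall hmin) hderiv)
  rw [eq_neg_iff_add_eq_zero, ← hg, hg_def]
  abel

end AugmentedLagrangian

theorem stmt14_general
    (F : EuclideanSpace ℝ (Fin n × Fin 4) → EuclideanSpace ℝ (Fin n × Fin 4) →
      EuclideanSpace ℝ (Fin b) → ℝ)
    (G : EuclideanSpace ℝ (Fin n × Fin 4) → EuclideanSpace ℝ (Fin n × Fin 4) → ℝ)
    (LF LG LFp LGp : ℝ)
    (hFdiff : Differentiable ℝ
      (fun x : EuclideanSpace ℝ (Fin n × Fin 4) × EuclideanSpace ℝ (Fin n × Fin 4) ×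
        EuclideanSpace ℝ (Fin b) => F x.1 x.2.1 x.2.2))
    (hGdiff : Differentiable ℝ
      (fun x : EuclideanSpace ℝ (Fin n × Fin 4) × EuclideanSpace ℝ (Fin n × Fin 4) =>
        G x.1 x.2))
    (hFlip : ∀ (p q p' q' : EuclideanSpace ℝ (Fin n × Fin 4))
        (t t' : EuclideanSpace ℝ (Fin b)),
      Real.sqrt (‖gradP F p q t - gradP F p' q' t'‖ ^ 2
          + ‖gradQ F p q t - gradQ F p' q' t'‖ ^ 2 + ‖gradT F p q t - gradT F p' q' t'‖ ^ 2)
        ≤ LF * Real.sqrt (‖p - p'‖ ^ 2 + ‖q - q'‖ ^ 2 + ‖t - t'‖ ^ 2))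
    (hGlip : ∀ p q p' q' : EuclideanSpace ℝ (Fin n × Fin 4),
      Real.sqrt (‖gradPG G p q - gradPG G p' q'‖ ^ 2 + ‖gradQG G p q - gradQG G p' q'‖ ^ 2)
        ≤ LG * Real.sqrt (‖p - p'‖ ^ 2 + ‖q - q'‖ ^ 2))
    (hFdescp : ∀ (p p' q : EuclideanSpace ℝ (Fin n × Fin 4)) (t : EuclideanSpace ℝ (Fin b)),
      F p' q t ≤ F p q t + ⟪gradP F p q t, p' - p⟫ + (LFp / 2) * ‖p' - p‖ ^ 2)
    (hGdescp : ∀ p p' q : EuclideanSpace ℝ (Fin n × Fin 4),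
      G p' q ≤ G p q + ⟪gradPG G p q, p' - p⟫ + (LGp / 2) * ‖p' - p‖ ^ 2)
    (H1 H2 : Matrix (Fin n × Fin 4) (Fin n × Fin 4) ℝ) (H3 : Matrix (Fin b) (Fin b) ℝ)
    (hH1 : (H1 - (LFp + LGp) • 1).PosDef) (hH2 : H2.PosDef) (hH3 : H3.PosDef)
    (β : ℝ)
    (hβ : β > max (max (8 * (LF ^ 2 + LG ^ 2) / (rayMin H1 - LFp - LGp))
      ((8 * (LF ^ 2 + LG ^ 2) + 16 * (rayMax H2) ^ 2) / rayMin H2))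
      (8 * LF ^ 2 / rayMin H3))
    (p q : ℕ → EuclideanSpace ℝ (Fin n × Fin 4)) (t : ℕ → EuclideanSpace ℝ (Fin b))
    (lam : ℕ → EuclideanSpace ℝ (Fin n × Fin 4))
    (hpstep : ∀ k, p (k + 1) ∈ sphereProd n ∧ ∀ y ∈ sphereProd n,
      ⟪gradP F (p k) (q k) (t k) + gradPG G (p k) (q k), p (k + 1)⟫ - ⟪lam k, p (k + 1)⟫
          + (β / 2) * ‖p (k + 1) - q k‖ ^ 2 + (1 / 2) * quadForm H1 (p (k + 1) - p k)
        ≤ ⟪gradP F (p k) (q k) (t k) + gradPG G (p k) (q k), y⟫ - ⟪lam k, y⟫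
          + (β / 2) * ‖y - q k‖ ^ 2 + (1 / 2) * quadForm H1 (y - p k))
    (hqstep : ∀ k, ∀ y : EuclideanSpace ℝ (Fin n × Fin 4),
      Lbeta F G β (p (k + 1)) (q (k + 1)) (t k) (lam k)
          + (1 / 2) * quadForm H2 (q (k + 1) - q k)
        ≤ Lbeta F G β (p (k + 1)) y (t k) (lam k) + (1 / 2) * quadForm H2 (y - q k))
    (htstep : ∀ k, ∀ y : EuclideanSpace ℝ (Fin b),
      Lbeta F G β (p (k + 1)) (q (k + 1)) (t (k + 1)) (lam k)
          + (1 / 2) * quadForm H3 (t (k + 1) - t k)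
        ≤ Lbeta F G β (p (k + 1)) (q (k + 1)) y (lam k) + (1 / 2) * quadForm H3 (y - t k))
    (hlam : ∀ k, lam (k + 1) = lam k - β • (p (k + 1) - q (k + 1)))
    (Φ : ℕ → ℝ)
    (hΦ : ∀ k, Φ k = Lbeta F G β (p k) (q k) (t k) (lam k)
      + (4 / β) * ‖matVec H2 (q k - q (k - 1))‖ ^ 2 + (4 * LF ^ 2 / β) * ‖t k - t (k - 1)‖ ^ 2)
    (P1 P2 : Matrix (Fin n × Fin 4) (Fin n × Fin 4) ℝ) (P3 : Matrix (Fin b) (Fin b) ℝ)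
    (hP1 : P1 = (1 / 2 : ℝ) • (H1 - (LFp + LGp) • 1) - ((4 / β) * (LF ^ 2 + LG ^ 2)) • 1)
    (hP2 : P2 = (1 / 2 : ℝ) • H2 - ((4 / β) * (LF ^ 2 + LG ^ 2)) • 1 - (8 / β) • (H2ᵀ * H2))
    (hP3 : P3 = (1 / 2 : ℝ) • H3 - ((4 / β) * LF ^ 2) • 1) :
    (∀ k, 2 ≤ k →
      quadForm P1 (p (k + 1) - p k) + quadForm P2 (q (k + 1) - q k)
          + quadForm P3 (t (k + 1) - t k)
        ≤ Φ k - Φ (k + 1)) ∧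
      P1.PosSemidef ∧ P2.PosSemidef ∧ P3.PosSemidef := by
  rw [gt_iff_lt, max_lt_iff, max_lt_iff] at hβ
  obtain ⟨⟨hβ₁, hβ₂⟩, hβ₃⟩ := hβ
  have hβ0 : 0 < β := (div_nonneg (by positivity) (rayMin_nonneg hH2.posSemidef)).trans_lt hβ₂
  subst hP1 hP2 hP3
  have hP3psd := posSemidef_half_smul_sub_smul_one (c := 0) (L := LF ^ 2) (by simpa using hH3)
    hβ0 (by simpa using hβ₃)
  refine ⟨fun k hk => ?_, posSemidef_half_smul_sub_smul_one hH1 hβ0 (by rwa [← sub_sub]),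
    posSemidef_half_smul_sub_smul_one_sub_smul_transpose_mul_self hH2 hβ0 hβ₂,
    by simpa using hP3psd⟩
  obtain ⟨j, rfl⟩ : ∃ j, k = j + 1 := ⟨k - 1, by omega⟩
  have hdual : ∀ i, lam (i + 1) = -(gradQ F (p (i + 1)) (q (i + 1)) (t i)
      + gradQG G (p (i + 1)) (q (i + 1)) + matVec H2 (q (i + 1) - q i)) := fun i =>
    (hlam i).trans <| dual_update_eq_of_forall_qStep_le hH2.1
      (DifferentiableAt.comp (f := fun y => (p (i + 1), y, t i)) _ (hFdiff _) (by fun_prop))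
      (DifferentiableAt.comp (f := fun y => (p (i + 1), y)) _ (hGdiff _) (by fun_prop))
      (hqstep i)
  have hΔlam := norm_sub_sq_le_of_eq_neg_add (hdual (j + 1)) (hdual j)
    (le_sq_mul_of_sqrt_add_add_le (by positivity) (by positivity) (by positivity)
      (hFlip _ _ _ _ _ _))
    (le_sq_mul_of_sqrt_add_le (by positivity) (by positivity) (hGlip _ _ _ _))
  have hpdec := Lbeta_add_half_quadForm_le_of_linearized_step (hFdescp _ _ _ _) (hGdescp _ _ _)
    ((hpstep (j + 1)).2 _ (hpstep j).1)
  have hqdec := hqstep (j + 1) (q (j + 1))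
  have htdec := htstep (j + 1) (t (j + 1))
  rw [sub_self, quadForm_zero] at hqdec htdec
  have hLdual := Lbeta_of_dual_update (F := F) (G := G) (t := t (j + 1 + 1)) (hlam (j + 1))
  have hΔlam' := div_le_div_of_nonneg_right hΔlam hβ0.le
  rw [hΦ, hΦ]
  simp only [sub_quadForm, smul_quadForm, one_quadForm, transpose_mul_self_quadForm,
    Nat.add_sub_cancel]
  linear_combination hpdec + hqdec + htdec + hΔlam' + hLdual

/-- Lemma 5.3 of the paper: the merit function `Φ` of PieADMM decreases monotonically
along the iterates by a quantified amount, and the coefficient matrices `P₁, P₂, P₃`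
are positive semidefinite. -/
theorem stmt14
    (F : EuclideanSpace ℝ (Fin n × Fin 4) → EuclideanSpace ℝ (Fin n × Fin 4) →
      EuclideanSpace ℝ (Fin b) → ℝ)
    (G : EuclideanSpace ℝ (Fin n × Fin 4) → EuclideanSpace ℝ (Fin n × Fin 4) → ℝ)
    (LF LG LFp LGp : ℝ)
    (hFdiff : Differentiable ℝ
      (fun x : EuclideanSpace ℝ (Fin n × Fin 4) × EuclideanSpace ℝ (Fin n × Fin 4) ×
        EuclideanSpace ℝ (Fin b) => F x.1 x.2.1 x.2.2))
    (hGdiff : Differentiable ℝ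
      (fun x : EuclideanSpace ℝ (Fin n × Fin 4) × EuclideanSpace ℝ (Fin n × Fin 4) =>
        G x.1 x.2))
    (hFlip : ∀ (p q p' q' : EuclideanSpace ℝ (Fin n × Fin 4))
        (t t' : EuclideanSpace ℝ (Fin b)),
      Real.sqrt (‖gradP F p q t - gradP F p' q' t'‖ ^ 2
          + ‖gradQ F p q t - gradQ F p' q' t'‖ ^ 2 + ‖gradT F p q t - gradT F p' q' t'‖ ^ 2)
        ≤ LF * Real.sqrt (‖p - p'‖ ^ 2 + ‖q - q'‖ ^ 2 + ‖t - t'‖ ^ 2))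
    (hGlip : ∀ p q p' q' : EuclideanSpace ℝ (Fin n × Fin 4),
      Real.sqrt (‖gradPG G p q - gradPG G p' q'‖ ^ 2 + ‖gradQG G p q - gradQG G p' q'‖ ^ 2)
        ≤ LG * Real.sqrt (‖p - p'‖ ^ 2 + ‖q - q'‖ ^ 2))
    (hFdescp : ∀ (p p' q : EuclideanSpace ℝ (Fin n × Fin 4)) (t : EuclideanSpace ℝ (Fin b)),
      F p' q t ≤ F p q t + ⟪gradP F p q t, p' - p⟫ + (LFp / 2) * ‖p' - p‖ ^ 2)
    (hGdescp : ∀ p p' q : EuclideanSpace ℝ (Fin n × Fin 4),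
      G p' q ≤ G p q + ⟪gradPG G p q, p' - p⟫ + (LGp / 2) * ‖p' - p‖ ^ 2)
    (H1 H2 : Matrix (Fin n × Fin 4) (Fin n × Fin 4) ℝ) (H3 : Matrix (Fin b) (Fin b) ℝ)
    (hH1s : H1.IsSymm) (hH2s : H2.IsSymm) (hH3s : H3.IsSymm)
    (hH1 : (H1 - (LFp + LGp) • 1).PosDef) (hH2 : H2.PosDef) (hH3 : H3.PosDef)
    (β : ℝ)
    (hβ : β > max (max (8 * (LF ^ 2 + LG ^ 2) / (rayMin H1 - LFp - LGp))
      ((8 * (LF ^ 2 + LG ^ 2) + 16 * (rayMax H2) ^ 2) / rayMin H2))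
      (8 * LF ^ 2 / rayMin H3))
    (p q : ℕ → EuclideanSpace ℝ (Fin n × Fin 4)) (t : ℕ → EuclideanSpace ℝ (Fin b))
    (lam : ℕ → EuclideanSpace ℝ (Fin n × Fin 4))
    (hpstep : ∀ k, p (k + 1) ∈ sphereProd n ∧ ∀ y ∈ sphereProd n,
      ⟪gradP F (p k) (q k) (t k) + gradPG G (p k) (q k), p (k + 1)⟫ - ⟪lam k, p (k + 1)⟫
          + (β / 2) * ‖p (k + 1) - q k‖ ^ 2 + (1 / 2) * quadForm H1 (p (k + 1) - p k)
        ≤ ⟪gradP F (p k) (q k) (t k) + gradPG G (p k) (q k), y⟫ - ⟪lam k, y⟫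
          + (β / 2) * ‖y - q k‖ ^ 2 + (1 / 2) * quadForm H1 (y - p k))
    (hqstep : ∀ k, ∀ y : EuclideanSpace ℝ (Fin n × Fin 4),
      Lbeta F G β (p (k + 1)) (q (k + 1)) (t k) (lam k)
          + (1 / 2) * quadForm H2 (q (k + 1) - q k)
        ≤ Lbeta F G β (p (k + 1)) y (t k) (lam k) + (1 / 2) * quadForm H2 (y - q k))
    (htstep : ∀ k, ∀ y : EuclideanSpace ℝ (Fin b),
      Lbeta F G β (p (k + 1)) (q (k + 1)) (t (k + 1)) (lam k)
          + (1 / 2) * quadForm H3 (t (k + 1) - t k)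
        ≤ Lbeta F G β (p (k + 1)) (q (k + 1)) y (lam k) + (1 / 2) * quadForm H3 (y - t k))
    (hlam : ∀ k, lam (k + 1) = lam k - β • (p (k + 1) - q (k + 1)))
    (Φ : ℕ → ℝ)
    (hΦ : ∀ k, Φ k = Lbeta F G β (p k) (q k) (t k) (lam k)
      + (4 / β) * ‖matVec H2 (q k - q (k - 1))‖ ^ 2 + (4 * LF ^ 2 / β) * ‖t k - t (k - 1)‖ ^ 2)
    (P1 P2 : Matrix (Fin n × Fin 4) (Fin n × Fin 4) ℝ) (P3 : Matrix (Fin b) (Fin b) ℝ)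
    (hP1 : P1 = (1 / 2 : ℝ) • (H1 - (LFp + LGp) • 1) - ((4 / β) * (LF ^ 2 + LG ^ 2)) • 1)
    (hP2 : P2 = (1 / 2 : ℝ) • H2 - ((4 / β) * (LF ^ 2 + LG ^ 2)) • 1 - (8 / β) • (H2ᵀ * H2))
    (hP3 : P3 = (1 / 2 : ℝ) • H3 - ((4 / β) * LF ^ 2) • 1) :
    (∀ k, 2 ≤ k →
      quadForm P1 (p (k + 1) - p k) + quadForm P2 (q (k + 1) - q k)
          + quadForm P3 (t (k + 1) - t k)
        ≤ Φ k - Φ (k + 1)) ∧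
      P1.PosSemidef ∧ P2.PosSemidef ∧ P3.PosSemidef :=
  stmt14_general F G LF LG LFp LGp hFdiff hGdiff hFlip hGlip hFdescp hGdescp H1 H2 H3 hH1 hH2 hH3 β
    hβ p q t lam hpstep hqstep htstep hlam Φ hΦ P1 P2 P3 hP1 hP2 hP3
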